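/- Let (X,d,m) be a doubling, strongly m-rectifiable metric measure space with dimensional decomposition (A_k)_{k∈ℕ}. Let ε_n ↓ 0 and for each n let 𝒜_n = {(U_i^{k,n}, φ_i^{k,n})}_{k,i} be an ε_n-atlas on X all of whose domains U_i^{k,n} are compact. Then there exists a sequence r_n ↓ 0 of positive reals such that for m-a.e. x ∈ X the following holds, where k is the (unique) index with x ∈ A_k: for every R > ε > 0 there exists n₀ ∈ ℕ such that for every n ≥ n₀, denoting by i the index with x ∈ U_i^{k,n}, for every map P : X → U_i^{k,n} satisfying d(y, P(y)) ≤ 2·dist(y, U_i^{k,n}) for all y ∈ X, the map Φ(y) := (φ_i^{k,n}(P(y)) − φ_i^{k,n}(x))/r_n satisfies: (a) | |Φ(y₀) − Φ(y₁)|_{ℝ^k} − d(y₀,y₁)/r_n | ≤ ε for all y₀, y₁ ∈ B_{r_n R}(x); and (b) for every w ∈ ℝ^k with |w| < R − ε there exists y ∈ B_{r_n R}(x) with |Φ(y) − w| ≤ ε. -/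

import Mathlib

open MeasureTheory Metric Set Filter Topology

section Defs

variable {X : Type*} [MetricSpace X] [MeasurableSpace X]

/-- `φ` is `L`-biLipschitz with its image on `U`:
`L⁻¹·d(x,y) ≤ d(φ x, φ y) ≤ L·d(x,y)` on `U`. -/
def BiLipschitzOnWith (L : ℝ) {k : ℕ} (φ : X → EuclideanSpace ℝ (Fin k)) (U : Set X) : Prop :=
  ∀ x ∈ U, ∀ y ∈ U, dist x y ≤ L * dist (φ x) (φ y) ∧ dist (φ x) (φ y) ≤ L * dist x y

/-- `(U i)` is an `m`-partition of `Ak`: pairwise disjoint Borel subsets of `Ak` covering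
`m`-almost all of `Ak`. -/
def IsMPartition (m : Measure X) (Ak : Set X) (U : ℕ → Set X) : Prop :=
  (∀ i, MeasurableSet (U i)) ∧ (∀ i, U i ⊆ Ak) ∧ Pairwise (Function.onFun Disjoint U) ∧
    m (Ak \ ⋃ i, U i) = 0

/-- The measure condition of a chart: `C⁻¹·L^k|_{φ(U)} ≤ φ_*(m|_U) ≤ C·L^k|_{φ(U)}`,
expressed by evaluation on Borel sets. -/
def ChartMeasureBound (m : Measure X) (C : NNReal) {k : ℕ} (U : Set X)
    (φ : X → EuclideanSpace ℝ (Fin k)) : Prop :=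
  ∀ B : Set (EuclideanSpace ℝ (Fin k)), MeasurableSet B →
    volume (B ∩ φ '' U) ≤ (C : ENNReal) * m (U ∩ φ ⁻¹' B) ∧
    m (U ∩ φ ⁻¹' B) ≤ (C : ENNReal) * volume (B ∩ φ '' U)

/-- An `ε`-atlas for the dimensional decomposition `A`. -/
def IsEpsAtlas (m : Measure X) (A : ℕ → Set X) (ε : ℝ)
    (U : ℕ → ℕ → Set X) (φ : (k : ℕ) → ℕ → X → EuclideanSpace ℝ (Fin k)) : Prop :=
  ∀ k, IsMPartition m (A k) (U k) ∧
    ∀ i, BiLipschitzOnWith (1 + ε) (φ k i) (U k i) ∧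
      ∃ C : NNReal, 1 ≤ C ∧ ChartMeasureBound m C (U k i) (φ k i)

/-- `(X,d,m)` is strongly `m`-rectifiable with dimensional decomposition `A`. -/
def StronglyRectifiable (m : Measure X) (A : ℕ → Set X) : Prop :=
  (∀ k, MeasurableSet (A k)) ∧ Pairwise (Function.onFun Disjoint A) ∧ (⋃ k, A k) = Set.univ ∧
  ∀ ε > (0 : ℝ), ∀ k : ℕ, ∃ (U : ℕ → Set X) (φ : ℕ → X → EuclideanSpace ℝ (Fin k)),
    IsMPartition m (A k) U ∧ ∀ i, BiLipschitzOnWith (1 + ε) (φ i) (U i) ∧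
      ∀ B : Set (EuclideanSpace ℝ (Fin k)), MeasurableSet B → volume B = 0 →
        m (U i ∩ φ i ⁻¹' B) = 0

end Defs

/-!
Almost every point `x` of a set `V` carrying a doubling measure is a point where `V` is not
porous: by the Lebesgue density theorem, `dist(y, V) = o(d(x, y))` as `y → x`. Applied to each
chart domain `U` in `X` and to its image `φ(U)` in `ℝ^k` (transported back to `X` by the measure
bound of the chart), this gives for almost every `x` a scale below which the quasi-projection `P`
moves points of the ball by a small fraction of the radius, and every point near `φ(x)` is close
to `φ(U)`. Since `φ` distorts distances by at most `1 + ε_n`, (a) follows, and (b) by pulling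
points of `φ(U)` close to `w` back through `φ`. A diagonal Borel–Cantelli argument then picks one
scale `r_n` per atlas that works for almost every `x` and all large `n`.
-/

section Porosity

variable {Y : Type*} [MetricSpace Y]

def porousPoints (V : Set Y) (δ s : ℝ) : Set Y :=
  {x | ∃ y ∈ ball x s, δ * dist y x < infDist y V}

lemma isOpen_porousPoints (V : Set Y) (δ s : ℝ) : IsOpen (porousPoints V δ s) := by
  have : porousPoints V δ s = ⋃ y, {x | dist y x < s} ∩ {x | δ * dist y x < infDist y V} := by
    ext x; simp [porousPoints]
  rw [this]
  exact isOpen_iUnion fun y => (isOpen_lt (by fun_prop) continuous_const).inter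
    (isOpen_lt (by fun_prop) continuous_const)

lemma infDist_le_of_notMem_porousPoints {V : Set Y} {δ s : ℝ} {x y : Y}
    (hx : x ∉ porousPoints V δ s) (hy : y ∈ ball x s) : infDist y V ≤ δ * dist y x :=
  not_lt.1 fun h => hx ⟨y, hy, h⟩

lemma eventually_notMem_porousPoints {V : Set Y} {δ : ℝ} {x : Y}
    (h : ∀ᶠ y in 𝓝 x, infDist y V ≤ δ * dist y x) : ∀ᶠ s in 𝓝 0, x ∉ porousPoints V δ s := by
  obtain ⟨s₀, hs₀, hball⟩ := Metric.eventually_nhds_iff_ball.1 h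
  filter_upwards [gt_mem_nhds hs₀] with s hs ⟨y, hy, hlt⟩
  exact (hball y (ball_subset_ball hs.le hy)).not_gt hlt

variable [MeasurableSpace Y] [BorelSpace Y] [SecondCountableTopology Y]
  (μ : Measure Y) [IsUnifLocDoublingMeasure μ] [IsLocallyFiniteMeasure μ]

/-- If `y` is far from `V`, the ball `B(y, δ d(y,x)/2)` misses `V` although `x` lies in the
concentric ball `2/δ` times larger; this is impossible at all small scales around a density
point `x` of `V`. -/
lemma ae_restrict_eventually_infDist_le (V : Set Y) {δ : ℝ} (hδ : 0 < δ) :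
    ∀ᵐ x ∂μ.restrict V, ∀ᶠ y in 𝓝 x, infDist y V ≤ δ * dist y x := by
  have hcl : ∀ᵐ x ∂μ.restrict V, x ∈ closure V := by
    change μ.restrict V (closure V)ᶜ = 0
    rw [Measure.restrict_apply isClosed_closure.measurableSet.compl]
    exact measure_mono_null (fun z hz => hz.1 (subset_closure hz.2)) measure_empty
  filter_upwards [IsUnifLocDoublingMeasure.ae_tendsto_measure_inter_div μ V (2 / δ), hcl]
    with x hx hxV
  by_contra hfreq
  set far := {y | δ * dist y x < infDist y V}
  have hne : (𝓝 x ⊓ 𝓟 far).NeBot := by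
    rw [← frequently_iff_neBot]
    simpa [far, not_le] using hfreq
  have hpos : ∀ y ∈ far, 0 < dist y x := by
    intro y hy
    refine dist_pos.2 fun hyx => ?_
    simp [far, hyx, infDist_zero_of_mem_closure hxV] at hy
  set ρ : Y → ℝ := fun y => δ * dist y x / 2
  have hρ : Tendsto ρ (𝓝 x ⊓ 𝓟 far) (𝓝[>] 0) := by
    refine tendsto_nhdsWithin_iff.2 ⟨?_, ?_⟩
    · have : Tendsto ρ (𝓝 x) (𝓝 (ρ x)) := (show Continuous ρ by fun_prop).tendsto x
      simpa [ρ] using this.mono_left inf_le_left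
    · exact eventually_inf_principal.2 (Eventually.of_forall fun y hy =>
        by have := hpos y hy; simp only [ρ, mem_Ioi]; positivity)
  have hmem : ∀ᶠ y in 𝓝 x ⊓ 𝓟 far, x ∈ closedBall y (2 / δ * ρ y) :=
    Eventually.of_forall fun y => by
      rw [mem_closedBall, dist_comm]
      simp only [ρ]
      field_simp
      rfl
  have hzero : ∀ᶠ y in 𝓝 x ⊓ 𝓟 far, μ (V ∩ closedBall y (ρ y)) / μ (closedBall y (ρ y)) = 0 := by
    refine eventually_inf_principal.2 (Eventually.of_forall fun y hy => ?_)
    have hρy : ρ y < infDist y V := by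
      have hy' : δ * dist y x < infDist y V := hy
      simp only [ρ]
      linarith [mul_pos hδ (hpos y hy)]
    simp [(disjoint_closedBall_of_lt_infDist hρy).symm.inter_eq]
  exact zero_ne_one (tendsto_nhds_unique (tendsto_const_nhds.congr' (hzero.mono fun _ h => h.symm))
    (hx _ ρ hρ hmem))

end Porosity

lemma eventually_forall_notMem_of_pairwise_disjoint {ι α β : Type*} {f : Filter β}
    {V : ι → Set α} {F : ι → β → Set α} (hV : Pairwise (Function.onFun Disjoint V))
    (hFV : ∀ i b, F i b ⊆ V i) {x : α} (h : ∀ i, ∀ᶠ b in f, x ∉ F i b) :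
    ∀ᶠ b in f, ∀ i, x ∉ F i b := by
  by_cases hx : ∃ i, x ∈ V i
  · obtain ⟨i₀, hi₀⟩ := hx
    filter_upwards [h i₀] with b hb i hi
    obtain rfl : i = i₀ := by_contra fun hne => (hV hne).notMem_of_mem_left (hFV i b hi) hi₀
    exact hb hi
  · exact Eventually.of_forall fun b i hi => hx ⟨i, hFV i b hi⟩

/-- Choose `L n` with `μ (S n ∩ E n (L n)) < 2⁻ⁿ` on the spanning sets `S n` of `μ`, then apply
Borel–Cantelli on each `S p`. -/
lemma exists_ae_eventually_notMem_diag {α : Type*} [MeasurableSpace α] {μ : Measure α}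
    [SigmaFinite μ] {E : ℕ → ℕ → Set α} (hE : ∀ n l, MeasurableSet (E n l))
    (h : ∀ n, ∀ᵐ x ∂μ, ∀ᶠ l in atTop, x ∉ E n l) :
    ∃ L : ℕ → ℕ, ∀ᵐ x ∂μ, ∀ᶠ n in atTop, x ∉ E n (L n) := by
  set S := spanningSets μ
  have htend : ∀ n, Tendsto (fun l => μ (S n ∩ E n l)) atTop (𝓝 0) := fun n => by
    simpa using tendsto_measure_of_ae_tendsto_indicator atTop MeasurableSet.empty
      (fun l => (measurableSet_spanningSets μ n).inter (hE n l)) (measurableSet_spanningSets μ n)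
      (measure_spanningSets_lt_top μ n).ne (Eventually.of_forall fun l => inter_subset_left)
      (by filter_upwards [h n] with x hx; filter_upwards [hx] with l hl; simp [hl])
  choose L hL using fun n => ((htend n).eventually_lt_const
    (ENNReal.pow_pos (by simp) n : (0 : ENNReal) < 2⁻¹ ^ n)).exists
  refine ⟨L, ?_⟩
  have hS : ∀ p, ∀ᵐ x ∂μ, x ∈ S p → ∀ᶠ n in atTop, x ∉ E n (L n) := by
    intro p
    rw [← ae_restrict_iff' (measurableSet_spanningSets μ p)]
    have hle : ∀ n, μ.restrict (S p) (E (n + p) (L (n + p))) ≤ 2⁻¹ ^ n := fun n => calc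
      μ.restrict (S p) (E (n + p) (L (n + p))) ≤ μ (S (n + p) ∩ E (n + p) (L (n + p))) := by
        rw [Measure.restrict_apply (hE _ _), inter_comm]
        exact measure_mono (inter_subset_inter_left _ (monotone_spanningSets μ (by omega)))
      _ ≤ 2⁻¹ ^ (n + p) := (hL _).le
      _ ≤ 2⁻¹ ^ n := pow_le_pow_right_of_le_one' (ENNReal.inv_le_one.2 one_le_two) (by omega)
    have hsum := ne_top_of_le_ne_top (by simp) (ENNReal.tsum_le_tsum hle)
    filter_upwards [ae_eventually_notMem hsum] with x hx
    rwa [← map_add_atTop_eq_nat p]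
  filter_upwards [ae_all_iff.2 hS] with x hx
  exact hx _ (mem_spanningSetsIndex μ x)

lemma exists_antitone_pos_le (t : ℕ → ℝ) (ht : ∀ n, 0 < t n) :
    ∃ r : ℕ → ℝ, (∀ n, 0 < r n) ∧ Antitone r ∧ ∀ n, r n ≤ t n :=
  ⟨fun n => (Finset.range (n + 1)).inf' Finset.nonempty_range_add_one t,
    fun n => (Finset.lt_inf'_iff _).2 fun j _ => ht j,
    fun _ _ hab => Finset.inf'_mono t (Finset.range_subset_range.2 (by omega)) _,
    fun n => Finset.inf'_le t (Finset.self_mem_range_succ n)⟩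

lemma IsUnifLocDoublingMeasure.of_measure_ball_two_mul_le {Y : Type*} [MetricSpace Y]
    [MeasurableSpace Y] {μ : Measure Y} {C : NNReal}
    (h : ∀ (x : Y) (ρ : ℝ), 0 < ρ → μ (ball x (2 * ρ)) ≤ C * μ (ball x ρ)) :
    IsUnifLocDoublingMeasure μ := by
  refine ⟨⟨C * C, ?_⟩⟩
  filter_upwards [self_mem_nhdsWithin] with ρ (hρ : 0 < ρ) x
  calc μ (closedBall x (2 * ρ)) ≤ μ (ball x (2 * (2 * ρ))) :=
        measure_mono (closedBall_subset_ball (by linarith))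
    _ ≤ C * (C * μ (ball x ρ)) := (h x _ (by positivity)).trans (by gcongr; exact h x ρ hρ)
    _ ≤ ↑(C * C) * μ (closedBall x ρ) := by
        rw [ENNReal.coe_mul, mul_assoc]; gcongr; exact ball_subset_closedBall

lemma ChartMeasureBound.ae_imp_of_ae_restrict_image {X : Type*} [MeasurableSpace X] {k : ℕ}
    {m : Measure X} {C : NNReal} {U : Set X}
    {φ : X → EuclideanSpace ℝ (Fin k)} (h : ChartMeasureBound m C U φ)
    {p : EuclideanSpace ℝ (Fin k) → Prop} (hp : ∀ᵐ w ∂volume.restrict (φ '' U), p w) :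
    ∀ᵐ x ∂m, x ∈ U → p (φ x) := by
  obtain ⟨N, hpN, hN, hN0⟩ := exists_measurable_superset_of_null (ae_iff.1 hp)
  rw [Measure.restrict_apply hN] at hN0
  have hUN : m (U ∩ φ ⁻¹' N) = 0 := by
    simpa [hN0] using (h N hN).2
  refine ae_iff.2 (measure_mono_null (fun x (hx : ¬(x ∈ U → p (φ x))) => ?_) hUN)
  obtain ⟨hxU, hpx⟩ := Classical.not_imp.1 hx
  exact ⟨hxU, hpN hpx⟩

section Charts

variable {X : Type*} [MetricSpace X] {k : ℕ}

lemma BiLipschitzOnWith.continuousOn {L : ℝ} {φ : X → EuclideanSpace ℝ (Fin k)} {U : Set X}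
    (h : BiLipschitzOnWith L φ U) : ContinuousOn φ U :=
  (LipschitzOnWith.of_dist_le' fun x hx y hy => (h x hx y hy).2).continuousOn

def chartPorousPoints (U : Set X) (φ : X → EuclideanSpace ℝ (Fin k)) (δ s : ℝ) : Set X :=
  U ∩ (porousPoints U δ s ∪ φ ⁻¹' porousPoints (φ '' U) δ s)

variable [MeasurableSpace X]

lemma measurableSet_chartPorousPoints [OpensMeasurableSpace X] {U : Set X}
    {φ : X → EuclideanSpace ℝ (Fin k)} (hU : MeasurableSet U) (hφ : ContinuousOn φ U)
    (δ s : ℝ) : MeasurableSet (chartPorousPoints U φ δ s) := by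
  obtain ⟨O, hO, hOφ⟩ := continuousOn_iff'.1 hφ _ (isOpen_porousPoints (φ '' U) δ s)
  rw [chartPorousPoints, inter_union_distrib_left, inter_comm U (φ ⁻¹' _), hOφ]
  exact (hU.inter (isOpen_porousPoints U δ s).measurableSet).union
    (hO.measurableSet.inter hU)

variable [BorelSpace X] [SecondCountableTopology X] {m : Measure X} [IsUnifLocDoublingMeasure m]
  [IsLocallyFiniteMeasure m]

lemma ae_eventually_notMem_chartPorousPoints {C : NNReal} {U : Set X}
    {φ : X → EuclideanSpace ℝ (Fin k)} (hU : MeasurableSet U) (hφ : ChartMeasureBound m C U φ)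
    {δ : ℝ} (hδ : 0 < δ) : ∀ᵐ x ∂m, ∀ᶠ s in 𝓝 0, x ∉ chartPorousPoints U φ δ s := by
  have hX : ∀ᵐ x ∂m, x ∈ U → ∀ᶠ s in 𝓝 0, x ∉ porousPoints U δ s := by
    rw [← ae_restrict_iff' hU]
    filter_upwards [ae_restrict_eventually_infDist_le m U hδ] with x hx
    exact eventually_notMem_porousPoints hx
  have hE : ∀ᵐ x ∂m, x ∈ U → ∀ᶠ s in 𝓝 0, φ x ∉ porousPoints (φ '' U) δ s := by
    refine hφ.ae_imp_of_ae_restrict_image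
      (p := fun w => ∀ᶠ s in 𝓝 0, w ∉ porousPoints (φ '' U) δ s) ?_
    filter_upwards [ae_restrict_eventually_infDist_le volume (φ '' U) hδ] with w hw
    exact eventually_notMem_porousPoints hw
  filter_upwards [hX, hE] with x hX hE
  by_cases hx : x ∈ U
  · filter_upwards [hX hx, hE hx] with s hXs hEs hxs
    exact hxs.2.elim hXs hEs
  · exact Eventually.of_forall fun s hxs => hx hxs.1

lemma IsEpsAtlas.ae_eventually_forall_notMem_chartPorousPoints {A : ℕ → Set X} {e : ℝ}
    {U : ℕ → ℕ → Set X} {φ : (k : ℕ) → ℕ → X → EuclideanSpace ℝ (Fin k)}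
    (h : IsEpsAtlas m A e U φ) (he : 0 < e) :
    ∀ᵐ x ∂m, ∀ k, ∀ᶠ s in 𝓝 0, ∀ i, x ∉ chartPorousPoints (U k i) (φ k i) e s := by
  have hchart : ∀ k i, ∀ᵐ x ∂m, ∀ᶠ s in 𝓝 0, x ∉ chartPorousPoints (U k i) (φ k i) e s :=
    fun k i => ae_eventually_notMem_chartPorousPoints ((h k).1.1 i)
      ((h k).2 i).2.choose_spec.2 he
  filter_upwards [ae_all_iff.2 fun k => ae_all_iff.2 (hchart k)] with x hx k
  exact eventually_forall_notMem_of_pairwise_disjoint (h k).1.2.2.1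
    (fun i s => inter_subset_left) (hx k)

lemma exists_ae_eventually_forall_notMem_chartPorousPoints {A : ℕ → Set X} {ε : ℕ → ℝ}
    {U : ℕ → ℕ → ℕ → Set X} {φ : ℕ → (k : ℕ) → ℕ → X → EuclideanSpace ℝ (Fin k)}
    (hε : ∀ n, 0 < ε n) (h : ∀ n, IsEpsAtlas m A (ε n) (U n) (φ n)) :
    ∃ L : ℕ → ℕ, ∀ᵐ x ∂m, ∀ᶠ n in atTop, ∀ k ≤ n, ∀ i,
      x ∉ chartPorousPoints (U n k i) (φ n k i) (ε n) (1 / (L n + 1)) := by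
  set E : ℕ → ℕ → Set X := fun n l =>
    ⋃ k ≤ n, ⋃ i, chartPorousPoints (U n k i) (φ n k i) (ε n) (1 / (l + 1))
  have hE : ∀ n, ∀ᵐ x ∂m, ∀ᶠ l in atTop, x ∉ E n l := fun n => by
    filter_upwards [(h n).ae_eventually_forall_notMem_chartPorousPoints (hε n)] with x hx
    filter_upwards [(eventually_all_finite (finite_le_nat n)).2 fun k _ =>
      tendsto_one_div_add_atTop_nhds_zero_nat.eventually (hx k)] with l hl
    simpa [E] using hl
  have hE_meas : ∀ n l, MeasurableSet (E n l) := fun n l =>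
    .iUnion fun k => .iUnion fun _ => .iUnion fun i =>
      measurableSet_chartPorousPoints ((h n k).1.1 i) ((h n k).2 i).1.continuousOn _ _
  obtain ⟨L, hL⟩ := exists_ae_eventually_notMem_diag hE_meas hE
  refine ⟨L, ?_⟩
  filter_upwards [hL] with x hx
  filter_upwards [hx] with n hn k hk i hi
  exact hn (mem_iUnion₂.2 ⟨k, hk, mem_iUnion.2 ⟨i, hi⟩⟩)

end Charts

section Rescaling

variable {E : Type*} [NormedAddCommGroup E] [NormedSpace ℝ E] {r : ℝ}

lemma norm_inv_smul_sub_sub_inv_smul_sub (hr : 0 < r) (a b c : E) :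
    ‖r⁻¹ • (a - c) - r⁻¹ • (b - c)‖ = dist a b / r := by
  rw [← smul_sub, sub_sub_sub_cancel_right, norm_smul, norm_inv, Real.norm_of_nonneg hr.le,
    dist_eq_norm, inv_mul_eq_div]

lemma norm_inv_smul_sub_sub (hr : 0 < r) (a c w : E) :
    ‖r⁻¹ • (a - c) - w‖ = dist a (c + r • w) / r := by
  have : r⁻¹ • (a - c) - w = r⁻¹ • (a - (c + r • w)) := by
    rw [← sub_sub, smul_sub _ (a - c), inv_smul_smul₀ hr.ne']
  rw [this, norm_smul, norm_inv, Real.norm_of_nonneg hr.le, dist_eq_norm, inv_mul_eq_div]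

end Rescaling

section QuasiIsometry

variable {X : Type*} [MetricSpace X] {k : ℕ} {U : Set X} {φ : X → EuclideanSpace ℝ (Fin k)}
  {e δ s ρ : ℝ} {x : X}

lemma dist_apply_le_of_notMem_porousPoints (hx : x ∉ porousPoints U δ s) (hδ : 0 ≤ δ)
    (hρ : ρ ≤ s) {P : X → X} (hP : ∀ y, dist y (P y) ≤ 2 * infDist y U) {y : X}
    (hy : y ∈ ball x ρ) : dist y (P y) ≤ 2 * (δ * ρ) := by
  have := infDist_le_of_notMem_porousPoints hx (ball_subset_ball hρ hy)
  have := mul_le_mul_of_nonneg_left (mem_ball.1 hy).le hδ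
  linarith [hP y]

lemma abs_dist_comp_sub_dist_le (hφ : BiLipschitzOnWith (1 + e) φ U) (he : 0 ≤ e)
    (he₁ : e ≤ 1) (hδ : 0 ≤ δ) (hδ₁ : δ ≤ 1) (hx : x ∉ porousPoints U δ s) (hρ : ρ ≤ s)
    {P : X → X} (hPU : ∀ y, P y ∈ U) (hP : ∀ y, dist y (P y) ≤ 2 * infDist y U) {y₀ y₁ : X}
    (hy₀ : y₀ ∈ ball x ρ) (hy₁ : y₁ ∈ ball x ρ) :
    |dist (φ (P y₀)) (φ (P y₁)) - dist y₀ y₁| ≤ (12 * e + 4 * δ) * ρ := by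
  have hP₀ := dist_apply_le_of_notMem_porousPoints hx hδ hρ hP hy₀
  have hP₁ := dist_apply_le_of_notMem_porousPoints hx hδ hρ hP hy₁
  have h01 : dist y₀ y₁ < 2 * ρ := by
    linarith [dist_triangle_right y₀ y₁ x, mem_ball.1 hy₀, mem_ball.1 hy₁]
  have hPP : dist (P y₀) (P y₁) ≤ dist y₀ y₁ + 4 * (δ * ρ) := by
    linarith [dist_triangle4 (P y₀) y₀ y₁ (P y₁), dist_comm (P y₀) y₀]
  have hyy : dist y₀ y₁ ≤ dist (P y₀) (P y₁) + 4 * (δ * ρ) := by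
    linarith [dist_triangle4 y₀ (P y₀) (P y₁) y₁, dist_comm (P y₁) y₁]
  obtain ⟨hlow, hup⟩ := hφ _ (hPU y₀) _ (hPU y₁)
  have hδρ : δ * ρ ≤ ρ := mul_le_of_le_one_left (pos_of_mem_ball hy₀).le hδ₁
  have hPP₆ : dist (P y₀) (P y₁) ≤ 6 * ρ := by linarith
  have heP := mul_le_mul_of_nonneg_left hPP₆ he
  have hφ₁₂ : dist (φ (P y₀)) (φ (P y₁)) ≤ 12 * ρ := by nlinarith
  have heφ := mul_le_mul_of_nonneg_left hφ₁₂ he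
  rw [abs_sub_le_iff]
  constructor <;> linarith

lemma exists_mem_dist_lt_of_notMem_porousPoints (hφ : BiLipschitzOnWith (1 + e) φ U)
    (he : 0 ≤ e) (hδ : 0 < δ) (hx : x ∈ U) (hφx : φ x ∉ porousPoints (φ '' U) δ s) {t : ℝ}
    (ht : t ≤ s) {z : EuclideanSpace ℝ (Fin k)} (hz : dist (φ x) z < t) :
    ∃ y ∈ U, dist z (φ y) < δ * t ∧ dist x y < (1 + e) * ((1 + δ) * t) := by
  have hinf : infDist z (φ '' U) < δ * t := by
    have := infDist_le_of_notMem_porousPoints hφx (ball_subset_ball ht (mem_ball'.2 hz))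
    rw [dist_comm] at this
    exact this.trans_lt (mul_lt_mul_of_pos_left hz hδ)
  obtain ⟨_, ⟨y, hyU, rfl⟩, hzy⟩ := (infDist_lt_iff ⟨φ x, mem_image_of_mem φ hx⟩).1 hinf
  refine ⟨y, hyU, hzy, (hφ x hx y hyU).1.trans_lt (mul_lt_mul_of_pos_left ?_ (by linarith))⟩
  linarith [dist_triangle (φ x) z (φ y)]

lemma quasiIsometry_of_notMem_chartPorousPoints {r R εx : ℝ}
    (hφ : BiLipschitzOnWith (1 + e) φ U) (he : 0 < e) (heR : 16 * e * R ≤ εx)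
    (hεx : 0 < εx) (hR : εx < R) (hr : 0 < r) (hrs : r * R ≤ s) (hxU : x ∈ U)
    (hx : x ∉ chartPorousPoints U φ e s) {P : X → X} (hPU : ∀ y, P y ∈ U)
    (hP : ∀ y, dist y (P y) ≤ 2 * infDist y U) :
    (∀ y₀ ∈ ball x (r * R), ∀ y₁ ∈ ball x (r * R),
      |‖r⁻¹ • (φ (P y₀) - φ x) - r⁻¹ • (φ (P y₁) - φ x)‖ - dist y₀ y₁ / r| ≤ εx) ∧
    (∀ w : EuclideanSpace ℝ (Fin k), ‖w‖ < R - εx →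
      ∃ y ∈ ball x (r * R), ‖r⁻¹ • (φ (P y) - φ x) - w‖ ≤ εx) := by
  have hxX : x ∉ porousPoints U e s := fun h => hx ⟨hxU, Or.inl h⟩
  have hxE : φ x ∉ porousPoints (φ '' U) e s := fun h => hx ⟨hxU, Or.inr h⟩
  have he₁ : e ≤ 1 := by nlinarith
  constructor
  · intro y₀ hy₀ y₁ hy₁
    have := abs_dist_comp_sub_dist_le hφ he.le he₁ he.le he₁ hxX hrs hPU hP hy₀ hy₁
    rw [norm_inv_smul_sub_sub_inv_smul_sub hr, ← sub_div, abs_div, abs_of_pos hr,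
      div_le_iff₀ hr]
    nlinarith
  · intro w hw
    have hz : dist (φ x) (φ x + r • w) < r * (R - εx) := by
      rw [dist_self_add_right, norm_smul, Real.norm_of_nonneg hr.le]
      exact mul_lt_mul_of_pos_left hw hr
    obtain ⟨y, hyU, hzy, hxy⟩ := exists_mem_dist_lt_of_notMem_porousPoints hφ he.le he hxU hxE
      (by nlinarith) hz
    have hPy : P y = y := by
      simpa [infDist_zero_of_mem hyU, eq_comm] using hP y
    have hRε : 0 < R - εx := sub_pos.2 hR
    have hee : e * e ≤ e := mul_le_of_le_one_left he.le he₁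
    have heRε : e * (R - εx) ≤ εx := by nlinarith
    have hscale : (1 + e) * ((1 + e) * (R - εx)) ≤ R := by
      nlinarith [mul_le_mul_of_nonneg_right hee hRε.le]
    refine ⟨y, mem_ball'.2 (hxy.trans_le ?_), ?_⟩
    · calc (1 + e) * ((1 + e) * (r * (R - εx))) = r * ((1 + e) * ((1 + e) * (R - εx))) := by ring
        _ ≤ r * R := mul_le_mul_of_nonneg_left hscale hr.le
    · rw [hPy, norm_inv_smul_sub_sub hr, dist_comm, div_le_iff₀ hr]
      calc dist (φ x + r • w) (φ y) ≤ r * (e * (R - εx)) := by linarith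
        _ ≤ εx * r := by nlinarith

end QuasiIsometry

theorem stmt11_general {X : Type*} [MetricSpace X] [SecondCountableTopology X]
    [MeasurableSpace X] [BorelSpace X] (m : Measure X)
    (hdoub : ∃ C : NNReal, 0 < C ∧ ∀ (x : X) (ρ : ℝ), 0 < ρ →
      0 < m (ball x (2 * ρ)) ∧ m (ball x (2 * ρ)) ≤ (C : ENNReal) * m (ball x ρ) ∧
        m (ball x ρ) < ⊤)
    (A : ℕ → Set X)
    (ε : ℕ → ℝ) (hεpos : ∀ n, 0 < ε n)
    (hεlim : Tendsto ε atTop (𝓝 0))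
    (U : ℕ → ℕ → ℕ → Set X) (φ : ℕ → (k : ℕ) → ℕ → X → EuclideanSpace ℝ (Fin k))
    (hatlas : ∀ n, IsEpsAtlas m A (ε n) (U n) (φ n)) :
    ∃ r : ℕ → ℝ, (∀ n, 0 < r n) ∧ Antitone r ∧ Tendsto r atTop (𝓝 0) ∧
      ∀ᵐ x ∂m, ∀ k, x ∈ A k → ∀ R εx : ℝ, 0 < εx → εx < R →
        ∃ n₀ : ℕ, ∀ n ≥ n₀, ∀ i, x ∈ U n k i →
          ∀ P : X → X, (∀ y, P y ∈ U n k i) →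
            (∀ y, dist y (P y) ≤ 2 * infDist y (U n k i)) →
            (∀ y₀ ∈ ball x (r n * R), ∀ y₁ ∈ ball x (r n * R),
              |‖(r n)⁻¹ • (φ n k i (P y₀) - φ n k i x) -
                  (r n)⁻¹ • (φ n k i (P y₁) - φ n k i x)‖ - dist y₀ y₁ / r n| ≤ εx) ∧
            (∀ w : EuclideanSpace ℝ (Fin k), ‖w‖ < R - εx →
              ∃ y ∈ ball x (r n * R),
                ‖(r n)⁻¹ • (φ n k i (P y) - φ n k i x) - w‖ ≤ εx) := by
  obtain ⟨C, -, hC⟩ := hdoub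
  have : IsLocallyFiniteMeasure m :=
    ⟨fun x => ⟨ball x 1, ball_mem_nhds x one_pos, (hC x 1 one_pos).2.2⟩⟩
  have := IsUnifLocDoublingMeasure.of_measure_ball_two_mul_le fun x ρ hρ => (hC x ρ hρ).2.1
  obtain ⟨L, hL⟩ := exists_ae_eventually_forall_notMem_chartPorousPoints hεpos hatlas
  obtain ⟨r, hr, hr_anti, hrL⟩ :=
    exists_antitone_pos_le (fun n => 1 / (L n + 1) / (n + 1)) fun n => by positivity
  have hr_lim : Tendsto r atTop (𝓝 0) :=
    squeeze_zero (fun n => (hr n).le) (fun n => (hrL n).trans (div_le_div_of_nonneg_right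
      (div_le_one_of_le₀ (by simp) (by positivity)) (by positivity)))
      tendsto_one_div_add_atTop_nhds_zero_nat
  refine ⟨r, hr, hr_anti, hr_lim, ?_⟩
  filter_upwards [hL] with x hx k _ R εx hεx hR
  have hεR : Tendsto (fun n => 16 * ε n * R) atTop (𝓝 0) := by
    simpa using (hεlim.const_mul 16).mul_const R
  obtain ⟨n₀, hn₀⟩ := eventually_atTop.1 <| (eventually_ge_atTop k).and <|
    ((tendsto_natCast_atTop_atTop.eventually_ge_atTop R).mono fun n h => show R ≤ n + 1 by linarith).and <|
    ((hεR.eventually_lt_const hεx).mono fun n h => h.le).and hx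
  refine ⟨n₀, fun n hn i hxU P hPU hP => ?_⟩
  obtain ⟨hkn, hRn, hεn, hxn⟩ := hn₀ n hn
  refine quasiIsometry_of_notMem_chartPorousPoints ((hatlas n k).2 i).1 (hεpos n) hεn hεx hR
    (hr n) ?_ hxU (hxn k hkn i) hPU hP
  calc r n * R ≤ 1 / (L n + 1) / (n + 1) * (n + 1) :=
        mul_le_mul (hrL n) hRn (by linarith) (by positivity)
    _ = 1 / (L n + 1) := by field_simp

/-- Let `(X,d,m)` be doubling and strongly `m`-rectifiable with dimensional
decomposition `(A_k)`, and let `𝒜_n = {(U_i^{k,n}, φ_i^{k,n})}` be `ε_n`-atlases with compact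
domains, `ε_n ↓ 0`. Then there is `r_n ↓ 0` such that for `m`-a.e. `x` (with `x ∈ A_k`):
for all `R > ε > 0` there is `n₀` such that for `n ≥ n₀`, for the chart domain containing `x`
and any quasi-projection `P` onto it, the rescaled map
`Φ(y) = (φ_i^{k,n}(P y) − φ_i^{k,n}(x))/r_n` is an `ε`-quasi isometry from `B_{r_n R}(x)`
to `B_R(0) ⊆ ℝ^k`. -/
theorem stmt11 {X : Type*} [MetricSpace X] [CompleteSpace X] [SecondCountableTopology X]
    [MeasurableSpace X] [BorelSpace X] (m : Measure X)
    (hdoub : ∃ C : NNReal, 0 < C ∧ ∀ (x : X) (ρ : ℝ), 0 < ρ →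
      0 < m (ball x (2 * ρ)) ∧ m (ball x (2 * ρ)) ≤ (C : ENNReal) * m (ball x ρ) ∧
        m (ball x ρ) < ⊤)
    (A : ℕ → Set X) (hA : StronglyRectifiable m A)
    (ε : ℕ → ℝ) (hεpos : ∀ n, 0 < ε n) (hεanti : Antitone ε)
    (hεlim : Tendsto ε atTop (𝓝 0))
    (U : ℕ → ℕ → ℕ → Set X) (φ : ℕ → (k : ℕ) → ℕ → X → EuclideanSpace ℝ (Fin k))
    (hatlas : ∀ n, IsEpsAtlas m A (ε n) (U n) (φ n))
    (hcomp : ∀ n k i, IsCompact (U n k i)) :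
    ∃ r : ℕ → ℝ, (∀ n, 0 < r n) ∧ Antitone r ∧ Tendsto r atTop (𝓝 0) ∧
      ∀ᵐ x ∂m, ∀ k, x ∈ A k → ∀ R εx : ℝ, 0 < εx → εx < R →
        ∃ n₀ : ℕ, ∀ n ≥ n₀, ∀ i, x ∈ U n k i →
          ∀ P : X → X, (∀ y, P y ∈ U n k i) →
            (∀ y, dist y (P y) ≤ 2 * infDist y (U n k i)) →
            (∀ y₀ ∈ ball x (r n * R), ∀ y₁ ∈ ball x (r n * R),
              |‖(r n)⁻¹ • (φ n k i (P y₀) - φ n k i x) -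
                  (r n)⁻¹ • (φ n k i (P y₁) - φ n k i x)‖ - dist y₀ y₁ / r n| ≤ εx) ∧
            (∀ w : EuclideanSpace ℝ (Fin k), ‖w‖ < R - εx →
              ∃ y ∈ ball x (r n * R),
                ‖(r n)⁻¹ • (φ n k i (P y) - φ n k i x) - w‖ ≤ εx) :=
  stmt11_general m hdoub A ε hεpos hεlim U φ hatlas
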